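/- (Negabicomplex Pell–Lucas numbers) For every natural number n, BPL(−n) = (−1)^n·BPL(n) + 8·(−1)^{n+1}·P(n)·(i + 2·j + 5·ij). -/
import Mathlib


open scoped TensorProduct

noncomputable def bi : ℂ ⊗[ℝ] ℂ := Complex.I ⊗ₜ[ℝ] 1
noncomputable def bj : ℂ ⊗[ℝ] ℂ := (1 : ℂ) ⊗ₜ[ℝ] Complex.I
noncomputable def bij : ℂ ⊗[ℝ] ℂ := Complex.I ⊗ₜ[ℝ] Complex.I

/-- The bicomplex Pell-Lucas number `BPL n = Q n + Q (n+1) i + Q (n+2) j + Q (n+3) ij`. -/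
noncomputable def BPL (Q : ℤ → ℤ) (n : ℤ) : ℂ ⊗[ℝ] ℂ :=
  (Q n : ℝ) • (1 : ℂ ⊗[ℝ] ℂ) + (Q (n + 1) : ℝ) • bi + (Q (n + 2) : ℝ) • bj +
    (Q (n + 3) : ℝ) • bij

theorem negaBicomplexPellLucas (P Q : ℤ → ℤ)
    (hP : ∀ n : ℤ, P (n + 2) = 2 * P (n + 1) + P n) (hP0 : P 0 = 0) (hP1 : P 1 = 1)
    (hQ : ∀ n : ℤ, Q (n + 2) = 2 * Q (n + 1) + Q n) (hQ0 : Q 0 = 2) (hQ1 : Q 1 = 2)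
    (n : ℕ) :
    BPL Q (-(n : ℤ)) =
      ((-1 : ℝ) ^ n) • BPL Q (n : ℤ) +
        (8 * (-1 : ℝ) ^ (n + 1) * (P (n : ℤ) : ℝ)) • (bi + (2 : ℝ) • bj + (5 : ℝ) • bij) := by
  have hrec : ∀ m : ℤ, BPL Q (m + 2) = (2 : ℝ) • BPL Q (m + 1) + BPL Q m := by
    intro m
    have h2 : Q (m + 2) = 2 * Q (m + 1) + Q m := hQ m
    have h3 : Q (m + 3) = 2 * Q (m + 2) + Q (m + 1) := by
      have := hQ (m + 1); rw [show m + 1 + 2 = m + 3 by ring, show m + 1 + 1 = m + 2 by ring] at this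
      exact this
    have h4 : Q (m + 4) = 2 * Q (m + 3) + Q (m + 2) := by
      have := hQ (m + 2); rw [show m + 2 + 2 = m + 4 by ring, show m + 2 + 1 = m + 3 by ring] at this
      exact this
    have h5 : Q (m + 5) = 2 * Q (m + 4) + Q (m + 3) := by
      have := hQ (m + 3); rw [show m + 3 + 2 = m + 5 by ring, show m + 3 + 1 = m + 4 by ring] at this
      exact this
    unfold BPL
    rw [show m + 2 + 1 = m + 3 by ring, show m + 2 + 2 = m + 4 by ring,
      show m + 2 + 3 = m + 5 by ring, show m + 1 + 1 = m + 2 by ring,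
      show m + 1 + 2 = m + 3 by ring, show m + 1 + 3 = m + 4 by ring,
      h5, h4, h3, h2]
    push_cast
    module
  have key : ∀ k : ℕ,
      (BPL Q (-(k : ℤ)) =
        ((-1 : ℝ) ^ k) • BPL Q (k : ℤ) +
          (8 * (-1 : ℝ) ^ (k + 1) * (P (k : ℤ) : ℝ)) • (bi + (2 : ℝ) • bj + (5 : ℝ) • bij)) ∧
      (BPL Q (-((k : ℤ) + 1)) =
        ((-1 : ℝ) ^ (k + 1)) • BPL Q ((k : ℤ) + 1) +
          (8 * (-1 : ℝ) ^ (k + 2) * (P ((k : ℤ) + 1) : ℝ)) •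
            (bi + (2 : ℝ) • bj + (5 : ℝ) • bij)) := by
    intro k
    induction k with
    | zero =>
      have hQm1 : Q (-1) = -2 := by
        have := hQ (-1); norm_num at this; omega
      have hQ2 : Q 2 = 6 := by have := hQ 0; norm_num [hQ0, hQ1] at this; omega
      have hQ3 : Q 3 = 14 := by have := hQ 1; norm_num [hQ1, hQ2] at this; omega
      have hQ4 : Q 4 = 34 := by have := hQ 2; norm_num [hQ2, hQ3] at this; omega
      constructor
      · simp only [Nat.cast_zero, neg_zero, pow_zero, one_smul, hP0]
        push_cast
        module
      · simp only [Nat.cast_zero, zero_add]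
        unfold BPL
        norm_num [hQm1, hQ0, hQ1, hQ2, hQ3, hQ4, hP1]
        module
    | succ k ih =>
      obtain ⟨ih1, ih2⟩ := ih
      have c1 : ((k + 1 : ℕ) : ℤ) = (k : ℤ) + 1 := by push_cast; ring
      constructor
      · rw [c1]
        convert ih2 using 2 <;> ring_nf
      · rw [c1, show (k : ℤ) + 1 + 1 = (k : ℤ) + 2 by ring,
          show k + 1 + 1 = k + 2 from rfl, show k + 1 + 2 = k + 3 from rfl]
        have hstep := hrec (-((k : ℤ) + 2))
        rw [show -((k : ℤ) + 2) + 2 = -(k : ℤ) by ring,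
          show -((k : ℤ) + 2) + 1 = -((k : ℤ) + 1) by ring] at hstep
        have hB : BPL Q ((k : ℤ) + 2) = (2 : ℝ) • BPL Q ((k : ℤ) + 1) + BPL Q (k : ℤ) :=
          hrec (k : ℤ)
        have hPk := hP (k : ℤ)
        have hthis : BPL Q (-((k : ℤ) + 2)) = BPL Q (-(k : ℤ)) - (2 : ℝ) • BPL Q (-((k : ℤ) + 1)) := by
          rw [hstep]; module
        rw [hthis, ih1, ih2, hB, hPk]
        push_cast
        rw [show ((-1 : ℝ)) ^ (k + 1) = -((-1 : ℝ)) ^ k by ring,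
          show ((-1 : ℝ)) ^ (k + 2) = ((-1 : ℝ)) ^ k by ring,
          show ((-1 : ℝ)) ^ (k + 3) = -((-1 : ℝ)) ^ k by ring]
        module
  exact (key n).1
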